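/- arXiv:2302.13989 — 11 statements merged into one kernel-verified Lean document; each statement's English description precedes it below -/
import Mathlib

section
/- In a set B with two group operations + and ∘, the distributivity condition a∘(b+c) = a∘b - a∘0 + a∘c (for all a,b,c) holds if and only if the 'truss' condition a∘(b - c + d) = a∘b - a∘c + a∘d holds for all a,b,c,d ∈ B. -/
structure TwoGroupOps (B : Type*) where
  add : B → B → B
  zero : B
  neg : B → B
  mul : B → B → B
  one : B
  inv : B → B
  add_assoc : ∀ a b c, add (add a b) c = add a (add b c)
  zero_add : ∀ a, add zero a = a
  add_zero : ∀ a, add a zero = a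
  neg_add : ∀ a, add (neg a) a = zero
  add_neg : ∀ a, add a (neg a) = zero
  mul_assoc : ∀ a b c, mul (mul a b) c = mul a (mul b c)
  one_mul : ∀ a, mul one a = a
  mul_one : ∀ a, mul a one = a
  inv_mul : ∀ a, mul (inv a) a = one
  mul_inv : ∀ a, mul a (inv a) = one

theorem dist_iff_truss {B : Type*} (T : TwoGroupOps B) :
    (∀ a b c : B, T.mul a (T.add b c) =
        T.add (T.mul a b) (T.add (T.neg (T.mul a T.zero)) (T.mul a c))) ↔
    (∀ a b c d : B, T.mul a (T.add b (T.add (T.neg c) d)) =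
        T.add (T.mul a b) (T.add (T.neg (T.mul a c)) (T.mul a d))) := by
  letI : Group B :=
    { mul := T.add
      one := T.zero
      inv := T.neg
      mul_assoc := T.add_assoc
      one_mul := T.zero_add
      mul_one := T.add_zero
      inv_mul_cancel := T.neg_add }
  have hadd : ∀ x y : B, T.add x y = x * y := fun _ _ => rfl
  have hneg : ∀ x : B, T.neg x = x⁻¹ := fun _ => rfl
  constructor
  · intro h a b c d
    have key := h a c (T.neg c)
    rw [T.add_neg] at key
    rw [h a b (T.add (T.neg c) d), h a (T.neg c) d]
    simp only [hadd, hneg] at key ⊢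
    have hz : T.mul a c⁻¹ =
        T.mul a T.zero * ((T.mul a c)⁻¹ * T.mul a T.zero) := by
      have h2 := congrArg (fun t => T.mul a T.zero * ((T.mul a c)⁻¹ * t)) key
      rw [h2]
      group
    rw [hz]
    group
  · intro h a b c
    have := h a b T.zero c
    rw [show T.neg T.zero = T.zero from by
      rw [← T.add_zero (T.neg T.zero), T.neg_add], T.zero_add] at this
    exact this
end

section
/- Let B be a near brace with additive neutral element 0 and multiplicative neutral element 1, satisfying a - a∘0 = 1 for all a ∈ B. Then 0∘0 = -1 (the additive inverse of 1) and 1 + 1 = 0⁻¹ (the multiplicative inverse of 0). -/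
structure NearBrace (B : Type*) where
  add : B → B → B
  zero : B
  neg : B → B
  mul : B → B → B
  one : B
  inv : B → B
  add_assoc : ∀ a b c, add (add a b) c = add a (add b c)
  zero_add : ∀ a, add zero a = a
  add_zero : ∀ a, add a zero = a
  neg_add : ∀ a, add (neg a) a = zero
  add_neg : ∀ a, add a (neg a) = zero
  mul_assoc : ∀ a b c, mul (mul a b) c = mul a (mul b c)
  one_mul : ∀ a, mul one a = a
  mul_one : ∀ a, mul a one = a
  inv_mul : ∀ a, mul (inv a) a = one
  mul_inv : ∀ a, mul a (inv a) = one
  dist : ∀ a b c, mul a (add b c) = add (mul a b) (add (neg (mul a zero)) (mul a c))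

theorem zero_mul_zero_and_one_add_one {B : Type*} (N : NearBrace B)
    (hsing : ∀ a : B, N.add a (N.neg (N.mul a N.zero)) = N.one) :
    N.mul N.zero N.zero = N.neg N.one ∧ N.add N.one N.one = N.inv N.zero := by
  have h0 := hsing N.zero
  rw [N.zero_add] at h0
  -- h0 : neg (0∘0) = 1
  have h1 : N.mul N.zero N.zero = N.neg N.one := by
    calc N.mul N.zero N.zero
        = N.add N.zero (N.mul N.zero N.zero) := (N.zero_add _).symm
      _ = N.add (N.add (N.neg N.one) N.one) (N.mul N.zero N.zero) := by rw [N.neg_add]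
      _ = N.add (N.neg N.one) (N.add N.one (N.mul N.zero N.zero)) := N.add_assoc _ _ _
      _ = N.add (N.neg N.one) (N.add (N.neg (N.mul N.zero N.zero)) (N.mul N.zero N.zero)) := by
            rw [h0]
      _ = N.add (N.neg N.one) N.zero := by rw [N.neg_add]
      _ = N.neg N.one := N.add_zero _
  refine ⟨h1, ?_⟩
  have h2 : N.mul N.zero (N.add N.one N.one) = N.one := by
    rw [N.dist, N.mul_one, h0, N.zero_add, N.add_zero]
  calc N.add N.one N.one
      = N.mul N.one (N.add N.one N.one) := (N.one_mul _).symm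
    _ = N.mul (N.mul (N.inv N.zero) N.zero) (N.add N.one N.one) := by rw [N.inv_mul]
    _ = N.mul (N.inv N.zero) (N.mul N.zero (N.add N.one N.one)) := N.mul_assoc _ _ _
    _ = N.mul (N.inv N.zero) N.one := by rw [h2]
    _ = N.inv N.zero := N.mul_one _
end

section
/- Let B be a near brace in which a - a∘0 = 1 and -a∘0 + a = 1 hold for all a ∈ B. Then 1 commutes additively with every element: a + 1 = 1 + a for all a ∈ B. -/
theorem one_add_comm {B : Type*} (N : NearBrace B)
    (hsing1 : ∀ a : B, N.add a (N.neg (N.mul a N.zero)) = N.one)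
    (hsing2 : ∀ a : B, N.add (N.neg (N.mul a N.zero)) a = N.one) :
    ∀ a : B, N.add a N.one = N.add N.one a := by
  intro a
  calc N.add a N.one = N.add a (N.add (N.neg (N.mul a N.zero)) a) := by rw [hsing2]
    _ = N.add (N.add a (N.neg (N.mul a N.zero))) a := by rw [N.add_assoc]
    _ = N.add N.one a := by rw [hsing1]
end

section
/- Let X be a set with group operations ∘ and + (neutral element 0 for +, 1 for ∘), and suppose f : X → X satisfies f(a∘b - a∘z + z) = f(a)∘f(b) - f(a)∘0∘z + z for all a,b ∈ X, for some fixed invertible z, and there exists e ∈ X with f(e) = 1. Then 0 = 1. -/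
theorem no_morphism_unless_zero_eq_one {X : Type*} (T : TwoGroupOps X) (z : X) (f : X → X)
    (hf : ∀ a b : X,
      f (T.add (T.mul a b) (T.add (T.neg (T.mul a z)) z)) =
        T.add (T.mul (f a) (f b))
          (T.add (T.neg (T.mul (T.mul (f a) T.zero) z)) z))
    (he : ∃ e : X, f e = T.one) :
    T.zero = T.one := by
  obtain ⟨e, he⟩ := he
  have h := hf e z
  rw [he, T.one_mul, T.one_mul, ← T.add_assoc, T.add_neg, T.zero_add] at h
  have h2 : T.add (T.neg (f z)) (f z)
      = T.add (T.neg (f z)) (T.add (f z) (T.add (T.neg (T.mul T.zero z)) z)) := by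
    rw [← h]
  rw [T.neg_add, ← T.add_assoc, T.neg_add, T.zero_add] at h2
  have h3 : T.mul T.zero z = z := by
    have h4 := congrArg (T.add (T.mul T.zero z)) h2
    rw [T.add_zero, ← T.add_assoc, T.add_neg, T.zero_add] at h4
    exact h4
  have h5 := congrArg (fun x => T.mul x (T.inv z)) h3
  change T.mul (T.mul T.zero z) (T.inv z) = T.mul z (T.inv z) at h5
  rw [T.mul_assoc, T.mul_inv, T.mul_one] at h5
  exact h5
end

section
/- Let B be a near brace, and z, w ∈ B satisfying right distributivity (a - b + c)∘h = a∘h - b∘h + c∘h for h ∈ {z,w}. Define σ_a(b) = a∘b - a∘0∘z + z and σ'_a(b) = a∘b - a∘0∘w + w. If σ_a(b) = σ'_a(b) for all a,b ∈ B, then z⁻¹∘w - 1 = w - z. -/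
theorem sigma_eq_implies {B : Type*} (N : NearBrace B) (z w : B)
    (hrdist_z : ∀ a b c : B, N.mul (N.add a (N.add (N.neg b) c)) z =
        N.add (N.mul a z) (N.add (N.neg (N.mul b z)) (N.mul c z)))
    (hrdist_w : ∀ a b c : B, N.mul (N.add a (N.add (N.neg b) c)) w =
        N.add (N.mul a w) (N.add (N.neg (N.mul b w)) (N.mul c w)))
    (heq : ∀ a b : B,
      N.add (N.mul a b) (N.add (N.neg (N.mul (N.mul a N.zero) z)) z) =
      N.add (N.mul a b) (N.add (N.neg (N.mul (N.mul a N.zero) w)) w)) :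
    N.add (N.mul (N.inv z) w) (N.neg N.one) = N.add w (N.neg z) := by
  -- Make (B, N.add) a multiplicative group so `group` can be used.
  letI : Mul B := ⟨N.add⟩
  letI : One B := ⟨N.zero⟩
  letI : Inv B := ⟨N.neg⟩
  letI : Group B := Group.ofLeftAxioms N.add_assoc N.zero_add N.neg_add
  have heq' : ∀ a b : B, N.mul a b * ((N.mul (N.mul a 1) z)⁻¹ * z)
      = N.mul a b * ((N.mul (N.mul a 1) w)⁻¹ * w) := heq
  have dist' : ∀ a b c : B, N.mul a (b * c)
      = N.mul a b * ((N.mul a 1)⁻¹ * N.mul a c) := N.dist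
  have key : ∀ a : B, ((N.mul (N.mul a 1) z)⁻¹ * z)
      = ((N.mul (N.mul a 1) w)⁻¹ * w) := fun a => mul_left_cancel (heq' a a)
  have star : ∀ a : B, N.mul (N.mul a 1) w * ((N.mul (N.mul a 1) z)⁻¹ * z) = w := by
    intro a
    rw [key a, mul_inv_cancel_left]
  have negf : ∀ a y : B, N.mul a y⁻¹ = N.mul a 1 * ((N.mul a y)⁻¹ * N.mul a 1) := by
    intro a y
    have h1 : N.mul a 1 = N.mul a y⁻¹ * ((N.mul a 1)⁻¹ * N.mul a y) := by
      have h := dist' a y⁻¹ y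
      rwa [inv_mul_cancel] at h
    have h2 := eq_mul_inv_of_mul_eq h1.symm
    rw [h2]; group
  have hA : N.mul (N.mul N.one (1:B)) w * ((N.mul (N.mul N.one (1:B)) z)⁻¹ * z) = w :=
    star N.one
  rw [N.one_mul] at hA
  have h5 : N.mul (N.inv z) (N.mul (1:B) w * ((N.mul (1:B) z)⁻¹ * z))
      = N.mul (N.inv z) w := congrArg (N.mul (N.inv z)) hA
  rw [dist', dist', negf (N.inv z) (N.mul (1:B) z), ← N.mul_assoc (N.inv z) (1:B) w,
    ← N.mul_assoc (N.inv z) (1:B) z, N.inv_mul] at h5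
  -- h5 : P * (c⁻¹ * (c * (Q⁻¹ * c) * (c⁻¹ * N.one))) = N.mul (N.inv z) w
  have lem : ∀ X Q zz ww : B, X * (Q⁻¹ * zz) = ww → X * Q⁻¹ = ww * zz⁻¹ := by
    intro X Q zz ww h
    rw [eq_mul_inv_iff_mul_eq, mul_assoc]; exact h
  have PQ := lem _ _ _ _ (star (N.inv z))
  show N.mul (N.inv z) w * (N.one)⁻¹ = w * z⁻¹
  rw [← h5]
  have gen : ∀ P Q c e : B, P * (c⁻¹ * (c * (Q⁻¹ * c) * (c⁻¹ * e))) * e⁻¹ = P * Q⁻¹ := by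
    intros; group
  rw [gen, PQ]
end

section
/- Let B be a near brace with parameters ξ, z₁, z₂ ∈ B satisfying right distributivity, and c₁ ∈ B with a∘z₂∘z₁ - a∘ξ = c₁ for all a ∈ B. With σᵖ_a(b) = a∘b∘z₁ - a∘ξ + z₂, one has σᵖ_a(σᵖ_b(c)) = a∘b∘c∘z₁∘z₁ - a∘b∘ξ∘z₁ + c₁ + z₂ for all a,b,c ∈ B. -/
theorem sigma_sigma {B : Type*} (N : NearBrace B)
    (ξ z1 z2 c1 c2 : B)
    (hrdist : ∀ h, h = ξ ∨ h = z1 ∨ h = z2 → ∀ a b c : B,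
      N.mul (N.add a (N.add (N.neg b) c)) h =
        N.add (N.mul a h) (N.add (N.neg (N.mul b h)) (N.mul c h)))
    (hc1 : ∀ a : B, N.add (N.mul (N.mul a z2) z1) (N.neg (N.mul a ξ)) = c1)
    (hc2 : ∀ a : B, N.add (N.neg (N.mul a ξ)) (N.mul (N.mul a z1) z2) = c2)
    (σ τ : B → B → B)
    (hσ : ∀ a b : B, σ a b =
      N.add (N.mul (N.mul a b) z1) (N.add (N.neg (N.mul a ξ)) z2))
    (hτ : ∀ b a : B, τ b a = N.mul (N.inv (σ a b)) (N.mul a b))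
    : ∀ a b c : B, σ a (σ b c) =
      N.add (N.mul (N.mul (N.mul (N.mul a b) c) z1) z1)
        (N.add (N.neg (N.mul (N.mul (N.mul a b) ξ) z1)) (N.add c1 z2)) := by
  intro a b c
  letI : Group B :=
    { mul := N.add
      one := N.zero
      inv := N.neg
      mul_assoc := N.add_assoc
      one_mul := N.zero_add
      mul_one := N.add_zero
      inv_mul_cancel := N.neg_add }
  have hA : ∀ x y : B, N.add x y = x * y := fun _ _ => rfl
  have hN : ∀ x : B, N.neg x = x⁻¹ := fun _ => rfl
  have hneg : ∀ x y : B, N.mul x y⁻¹ = N.mul x 1 * (N.mul x y)⁻¹ * N.mul x 1 := by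
    intro x y
    have h' : N.mul x 1 = N.mul x y * ((N.mul x 1)⁻¹ * N.mul x y⁻¹) := by
      have h := N.dist x y (N.neg y)
      rw [N.add_neg] at h
      exact h
    calc N.mul x y⁻¹
        = (N.mul x y * (N.mul x 1)⁻¹)⁻¹ * (N.mul x y * ((N.mul x 1)⁻¹ * N.mul x y⁻¹)) := by
          group
      _ = (N.mul x y * (N.mul x 1)⁻¹)⁻¹ * N.mul x 1 := by rw [← h']
      _ = N.mul x 1 * (N.mul x y)⁻¹ * N.mul x 1 := by group
  have h216 : ∀ x p q r : B,
      N.mul x (p * (q⁻¹ * r)) = N.mul x p * ((N.mul x q)⁻¹ * N.mul x r) := by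
    intro x p q r
    have h1 : N.mul x (p * (q⁻¹ * r)) = N.mul x p * ((N.mul x 1)⁻¹ * N.mul x (q⁻¹ * r)) :=
      N.dist x p _
    have h2 : N.mul x (q⁻¹ * r) = N.mul x q⁻¹ * ((N.mul x 1)⁻¹ * N.mul x r) :=
      N.dist x _ r
    rw [h1, h2, hneg]
    group
  have hrz1 : ∀ p q r : B,
      N.mul (p * (q⁻¹ * r)) z1 = N.mul p z1 * ((N.mul q z1)⁻¹ * N.mul r z1) :=
    fun p q r => hrdist z1 (Or.inr (Or.inl rfl)) p q r
  have hc1' : N.mul (N.mul a z2) z1 * (N.mul a ξ)⁻¹ = c1 := hc1 a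
  rw [hσ, hσ]
  simp only [hA, hN]
  rw [h216 a (N.mul (N.mul b c) z1) (N.mul b ξ) z2, hrz1,
    show N.mul a (N.mul (N.mul b c) z1) = N.mul (N.mul (N.mul a b) c) z1 by
      rw [← N.mul_assoc, ← N.mul_assoc],
    show N.mul a (N.mul b ξ) = N.mul (N.mul a b) ξ from (N.mul_assoc a b ξ).symm,
    ← hc1']
  group
end

section
/- Let B be a near brace with parameters ξ, z₁, z₂ ∈ B satisfying right distributivity, and c₂ ∈ B with -a∘ξ + a∘z₁∘z₂ = c₂ for all a ∈ B. With σᵖ_a(b) = a∘b∘z₁ - a∘ξ + z₂ and τᵖ_b(a) = σᵖ_a(b)⁻¹∘a∘b, one has σᵖ_a(b) ∘ σᵖ_{τᵖ_b(a)}(c) = a∘b∘c∘z₁ + c₂ - a∘ξ∘z₂ + z₂∘z₂ for all a,b,c ∈ B. -/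
theorem sigma_mul_sigma_tau {B : Type*} (N : NearBrace B)
    (ξ z1 z2 c1 c2 : B)
    (hrdist : ∀ h, h = ξ ∨ h = z1 ∨ h = z2 → ∀ a b c : B,
      N.mul (N.add a (N.add (N.neg b) c)) h =
        N.add (N.mul a h) (N.add (N.neg (N.mul b h)) (N.mul c h)))
    (hc1 : ∀ a : B, N.add (N.mul (N.mul a z2) z1) (N.neg (N.mul a ξ)) = c1)
    (hc2 : ∀ a : B, N.add (N.neg (N.mul a ξ)) (N.mul (N.mul a z1) z2) = c2)
    (σ τ : B → B → B)
    (hσ : ∀ a b : B, σ a b =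
      N.add (N.mul (N.mul a b) z1) (N.add (N.neg (N.mul a ξ)) z2))
    (hτ : ∀ b a : B, τ b a = N.mul (N.inv (σ a b)) (N.mul a b))
    : ∀ a b c : B, N.mul (σ a b) (σ (τ b a) c) =
      N.add (N.mul (N.mul (N.mul a b) c) z1)
        (N.add c2 (N.add (N.neg (N.mul (N.mul a ξ) z2)) (N.mul z2 z2))) := by
  letI : Add B := ⟨N.add⟩
  letI : Zero B := ⟨N.zero⟩
  letI : Neg B := ⟨N.neg⟩
  letI : AddGroup B := AddGroup.ofLeftAxioms N.add_assoc N.zero_add N.neg_add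
  letI : Mul B := ⟨N.mul⟩
  letI : One B := ⟨N.one⟩
  letI : Inv B := ⟨N.inv⟩
  letI : Group B := Group.ofLeftAxioms N.mul_assoc N.one_mul N.inv_mul
  have dist : ∀ x y z : B, x * (y + z) = x * y + (-(x * 0) + x * z) := N.dist
  have hσ' : ∀ a b : B, σ a b = (a * b) * z1 + (-(a * ξ) + z2) := hσ
  have hτ' : ∀ b a : B, τ b a = (σ a b)⁻¹ * (a * b) := hτ
  have hc2' : ∀ a : B, -(a * ξ) + (a * z1) * z2 = c2 := hc2
  have rz2 : ∀ x y z : B, (x + (-y + z)) * z2 = x * z2 + (-(y * z2) + z * z2) :=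
    hrdist z2 (Or.inr (Or.inr rfl))
  have mulneg : ∀ x y : B, x * (-y) = x * 0 + (-(x * y) + x * 0) := by
    intro x y
    have h := dist x y (-y)
    rw [add_neg_cancel] at h
    have h2 : -(x * y) + x * 0 = -(x * 0) + x * (-y) := by
      conv_lhs => rw [h]
      rw [neg_add_cancel_left]
    have h3 : x * (-y) = x * 0 + (-(x * 0) + x * (-y)) := (add_neg_cancel_left _ _).symm
    rw [h3, ← h2]
  have key : ∀ x u v w : B, x * (u + (-v + w)) = x * u + (-(x * v) + x * w) := by
    intro x u v w
    rw [dist x u (-v + w), dist x (-v) w, mulneg x v]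
    simp [add_assoc]
  intro a b c
  have hst : σ a b * τ b a = a * b := by
    rw [hτ' b a]
    exact mul_inv_cancel_left _ _
  show σ a b * σ (τ b a) c =
      ((a * b) * c) * z1 + (c2 + (-((a * ξ) * z2) + z2 * z2))
  calc σ a b * σ (τ b a) c
      = σ a b * ((τ b a * c) * z1 + (-(τ b a * ξ) + z2)) := by rw [hσ' (τ b a) c]
    _ = σ a b * ((τ b a * c) * z1) + (-(σ a b * (τ b a * ξ)) + σ a b * z2) := key _ _ _ _
    _ = ((a * b) * c) * z1 + (-((a * b) * ξ) + σ a b * z2) := by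
        rw [show σ a b * ((τ b a * c) * z1) = ((a * b) * c) * z1 by
              rw [← mul_assoc, ← mul_assoc, hst],
            show σ a b * (τ b a * ξ) = (a * b) * ξ by rw [← mul_assoc, hst]]
    _ = ((a * b) * c) * z1 +
          (-((a * b) * ξ) + (((a * b) * z1) * z2 + (-((a * ξ) * z2) + z2 * z2))) := by
        rw [hσ' a b, rz2]
    _ = ((a * b) * c) * z1 + (c2 + (-((a * ξ) * z2) + z2 * z2)) := by
        rw [← add_assoc (-((a * b) * ξ)), hc2' (a * b)]
end

section
/- Let B be a near brace with parameters ξ, z₁, z₂ ∈ B satisfying right distributivity, and constants c₁, c₂ ∈ B with a∘z₂∘z₁ - a∘ξ = c₁ and -a∘ξ + a∘z₁∘z₂ = c₂ for all a ∈ B. Then the map ř : B×B → B×B given by ř(a,b) = (σᵖ_a(b), τᵖ_b(a)) with σᵖ_a(b) = a∘b∘z₁ - a∘ξ + z₂ and τᵖ_b(a) = σᵖ_a(b)⁻¹∘a∘b satisfies the set-theoretic braid equation (ř×id)(id×ř)(ř×id) = (id×ř)(ř×id)(id×ř). -/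
section BraidAux

variable {G : Type*} [AddGroup G] [Group G]

def nbSig (ξ z1 z2 : G) (a b : G) : G := a * b * z1 + (-(a * ξ) + z2)

def nbTau (ξ z1 z2 : G) (b a : G) : G := (nbSig ξ z1 z2 a b)⁻¹ * (a * b)

variable (ξ z1 z2 c1 c2 : G)

theorem nb_lmul3 (ldist : ∀ a b c : G, a * (b + c) = a * b + (-(a * 0) + a * c)) :
    ∀ u p q r : G, u * (p + (-q + r)) = u * p + (-(u * q) + u * r) := by
  have hneg : ∀ u q : G, u * (-q) = u * 0 + (-(u * q) + u * 0) := by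
    intro u q
    have h := ldist u q (-q)
    rw [add_neg_cancel] at h
    have h2 : -(u * q) + u * 0 = -(u * 0) + u * (-q) := by
      conv_lhs => rw [h]
      rw [neg_add_cancel_left]
    rw [h2, add_neg_cancel_left]
  intro u p q r
  rw [ldist u p (-q + r), ldist u (-q) r, hneg u q]
  simp [add_assoc]

theorem nb_lcancel (ldist : ∀ a b c : G, a * (b + c) = a * b + (-(a * 0) + a * c)) :
    ∀ x X R : G, -(x * X) + x * (X + R) = -(x * 0) + x * R := by
  intro x X R
  rw [ldist, neg_add_cancel_left]

theorem nb_hc2' (hc2 : ∀ a : G, -(a * ξ) + a * z1 * z2 = c2) :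
    ∀ x : G, x * z1 * z2 = x * ξ + c2 := by
  intro x
  rw [← hc2 x, add_neg_cancel_left]

theorem nb_key1
    (ldist : ∀ a b c : G, a * (b + c) = a * b + (-(a * 0) + a * c))
    (rd1 : ∀ a b c : G, (a + (-b + c)) * z1 = a * z1 + (-(b * z1) + c * z1))
    (hc1 : ∀ a : G, a * z2 * z1 + -(a * ξ) = c1) :
    ∀ u v c : G, nbSig ξ z1 z2 u (nbSig ξ z1 z2 v c) =
      u * v * c * z1 * z1 + (-(u * v * ξ * z1) + (c1 + z2)) := by
  intro u v c
  have e1 : u * nbSig ξ z1 z2 v c = u * v * c * z1 + (-(u * v * ξ) + u * z2) := by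
    unfold nbSig
    rw [nb_lmul3 ldist]
    simp [mul_assoc]
  show u * nbSig ξ z1 z2 v c * z1 + (-(u * ξ) + z2) = _
  rw [e1, rd1]
  rw [add_assoc, add_assoc, ← add_assoc (u * z2 * z1), hc1 u]

theorem nb_sig_z2
    (rd2 : ∀ a b c : G, (a + (-b + c)) * z2 = a * z2 + (-(b * z2) + c * z2))
    (hc2 : ∀ a : G, -(a * ξ) + a * z1 * z2 = c2) :
    ∀ x y : G, nbSig ξ z1 z2 x y * z2 =
      x * y * ξ + (c2 + (-(x * ξ * z2) + z2 * z2)) := by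
  intro x y
  unfold nbSig
  rw [rd2, nb_hc2' ξ z1 z2 c2 hc2 (x * y), add_assoc]

theorem nb_id1
    (ldist : ∀ a b c : G, a * (b + c) = a * b + (-(a * 0) + a * c))
    (rd1 : ∀ a b c : G, (a + (-b + c)) * z1 = a * z1 + (-(b * z1) + c * z1))
    (hc1 : ∀ a : G, a * z2 * z1 + -(a * ξ) = c1)
    (a b c : G) :
    nbSig ξ z1 z2 (nbSig ξ z1 z2 a b) (nbSig ξ z1 z2 (nbTau ξ z1 z2 b a) c) =
      nbSig ξ z1 z2 a (nbSig ξ z1 z2 b c) := by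
  rw [nb_key1 ξ z1 z2 c1 ldist rd1 hc1 (nbSig ξ z1 z2 a b) (nbTau ξ z1 z2 b a) c,
    nb_key1 ξ z1 z2 c1 ldist rd1 hc1 a b c]
  have : nbSig ξ z1 z2 a b * nbTau ξ z1 z2 b a = a * b := by
    unfold nbTau
    rw [mul_inv_cancel_left]
  rw [this]

theorem nb_id2
    (ldist : ∀ a b c : G, a * (b + c) = a * b + (-(a * 0) + a * c))
    (rd1 : ∀ a b c : G, (a + (-b + c)) * z1 = a * z1 + (-(b * z1) + c * z1))
    (rd2 : ∀ a b c : G, (a + (-b + c)) * z2 = a * z2 + (-(b * z2) + c * z2))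
    (hc1 : ∀ a : G, a * z2 * z1 + -(a * ξ) = c1)
    (hc2 : ∀ a : G, -(a * ξ) + a * z1 * z2 = c2)
    (a b c : G) :
    nbTau ξ z1 z2 (nbSig ξ z1 z2 (nbTau ξ z1 z2 b a) c) (nbSig ξ z1 z2 a b) =
      nbSig ξ z1 z2 (nbTau ξ z1 z2 (nbSig ξ z1 z2 b c) a) (nbTau ξ z1 z2 c b) := by
  have htau : ∀ y x : G, nbTau ξ z1 z2 y x = (nbSig ξ z1 z2 x y)⁻¹ * (x * y) :=
    fun _ _ => rfl
  have hsig : ∀ x y : G, nbSig ξ z1 z2 x y = x * y * z1 + (-(x * ξ) + z2) :=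
    fun _ _ => rfl
  set u := nbSig ξ z1 z2 a b with hu
  set v := nbTau ξ z1 z2 b a with hv
  set w := nbSig ξ z1 z2 v c with hw
  set W := nbSig ξ z1 z2 b c with hW
  set S := nbSig ξ z1 z2 a W with hS
  set p := nbTau ξ z1 z2 W a with hp
  set q := nbTau ξ z1 z2 c b with hq
  have hUW : nbSig ξ z1 z2 u w = S := by
    rw [hw, hv, hu, hS, hW]
    exact nb_id1 ξ z1 z2 c1 ldist rd1 hc1 a b c
  have huw : u * w = a * (b * (c * z1)) + (-(a * (b * ξ)) + u * z2) := by
    rw [hw, hsig v c, nb_lmul3 ldist, hv, htau b a, ← hu]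
    simp [mul_assoc, mul_inv_cancel_left]
  have hLdone : -(S⁻¹ * (a * (b * ξ))) + S⁻¹ * (u * z2) =
      -(S⁻¹ * 0) + S⁻¹ * (c2 + (-(a * ξ * z2) + z2 * z2)) := by
    rw [hu, nb_sig_z2 ξ z1 z2 c2 rd2 hc2 a b, mul_assoc a b ξ, nb_lcancel ldist]
  have hpq : p * q = S⁻¹ * (a * (b * c)) := by
    rw [hp, hq, htau W a, htau c b, ← hS, ← hW]
    simp [mul_assoc, mul_inv_cancel_left]
  have hpxi : p * ξ = S⁻¹ * (a * (W * ξ)) := by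
    rw [hp, htau W a, ← hS]
    simp [mul_assoc]
  have hRdone : -(p * ξ) + z2 =
      -(S⁻¹ * 0) + S⁻¹ * (c2 + (-(a * ξ * z2) + z2 * z2)) := by
    rw [hpxi]
    conv_lhs => rw [show (z2 : G) = S⁻¹ * (S * z2) from (inv_mul_cancel_left S z2).symm]
    rw [hS, nb_sig_z2 ξ z1 z2 c2 rd2 hc2 a W, ← hS, mul_assoc a W ξ, nb_lcancel ldist]
  calc nbTau ξ z1 z2 w u = (nbSig ξ z1 z2 u w)⁻¹ * (u * w) := htau w u
    _ = S⁻¹ * (u * w) := by rw [hUW]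
    _ = S⁻¹ * (a * (b * (c * z1))) + (-(S⁻¹ * (a * (b * ξ))) + S⁻¹ * (u * z2)) := by
        rw [huw, nb_lmul3 ldist]
    _ = S⁻¹ * (a * (b * (c * z1))) +
        (-(S⁻¹ * 0) + S⁻¹ * (c2 + (-(a * ξ * z2) + z2 * z2))) := by rw [hLdone]
    _ = p * q * z1 + (-(p * ξ) + z2) := by
        rw [hpq, hRdone]
        simp [mul_assoc]
    _ = nbSig ξ z1 z2 p q := (hsig p q).symm

theorem nb_id3
    (ldist : ∀ a b c : G, a * (b + c) = a * b + (-(a * 0) + a * c))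
    (rd1 : ∀ a b c : G, (a + (-b + c)) * z1 = a * z1 + (-(b * z1) + c * z1))
    (rd2 : ∀ a b c : G, (a + (-b + c)) * z2 = a * z2 + (-(b * z2) + c * z2))
    (hc1 : ∀ a : G, a * z2 * z1 + -(a * ξ) = c1)
    (hc2 : ∀ a : G, -(a * ξ) + a * z1 * z2 = c2)
    (a b c : G) :
    nbTau ξ z1 z2 c (nbTau ξ z1 z2 b a) =
      nbTau ξ z1 z2 (nbTau ξ z1 z2 c b) (nbTau ξ z1 z2 (nbSig ξ z1 z2 b c) a) := by
  have h2 := nb_id2 ξ z1 z2 c1 c2 ldist rd1 rd2 hc1 hc2 a b c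
  have hUW := nb_id1 ξ z1 z2 c1 ldist rd1 hc1 a b c
  simp only [nbTau] at h2 hUW ⊢
  rw [← h2, hUW]
  simp [mul_assoc, mul_inv_rev, inv_mul_cancel_left, mul_inv_cancel_left, inv_inv]

end BraidAux




theorem near_brace_braid_equation {B : Type*} (N : NearBrace B)
    (ξ z1 z2 c1 c2 : B)
    (hrdist : ∀ h, h = ξ ∨ h = z1 ∨ h = z2 → ∀ a b c : B,
      N.mul (N.add a (N.add (N.neg b) c)) h =
        N.add (N.mul a h) (N.add (N.neg (N.mul b h)) (N.mul c h)))
    (hc1 : ∀ a : B, N.add (N.mul (N.mul a z2) z1) (N.neg (N.mul a ξ)) = c1)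
    (hc2 : ∀ a : B, N.add (N.neg (N.mul a ξ)) (N.mul (N.mul a z1) z2) = c2)
    (σ τ : B → B → B)
    (hσ : ∀ a b : B, σ a b =
      N.add (N.mul (N.mul a b) z1) (N.add (N.neg (N.mul a ξ)) z2))
    (hτ : ∀ b a : B, τ b a = N.mul (N.inv (σ a b)) (N.mul a b))
    (R : B × B → B × B) (hR : ∀ a b : B, R (a, b) = (σ a b, τ b a))
    (r12 r23 : B × B × B → B × B × B)
    (hr12 : ∀ p : B × B × B,
      r12 p = ((R (p.1, p.2.1)).1, (R (p.1, p.2.1)).2, p.2.2))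
    (hr23 : ∀ p : B × B × B, r23 p = (p.1, R p.2)) :
    ∀ p : B × B × B, r12 (r23 (r12 p)) = r23 (r12 (r23 p)) := by
  letI : Add B := ⟨N.add⟩
  letI : Zero B := ⟨N.zero⟩
  letI : Neg B := ⟨N.neg⟩
  letI : Mul B := ⟨N.mul⟩
  letI : One B := ⟨N.one⟩
  letI : Inv B := ⟨N.inv⟩
  letI : AddGroup B := AddGroup.ofLeftAxioms N.add_assoc N.zero_add N.neg_add
  letI : Group B := Group.ofLeftAxioms N.mul_assoc N.one_mul N.inv_mul
  have ldist : ∀ a b c : B, a * (b + c) = a * b + (-(a * 0) + a * c) := N.dist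
  have rd1 : ∀ a b c : B, (a + (-b + c)) * z1 = a * z1 + (-(b * z1) + c * z1) :=
    hrdist z1 (Or.inr (Or.inl rfl))
  have rd2 : ∀ a b c : B, (a + (-b + c)) * z2 = a * z2 + (-(b * z2) + c * z2) :=
    hrdist z2 (Or.inr (Or.inr rfl))
  have hc1' : ∀ a : B, a * z2 * z1 + -(a * ξ) = c1 := hc1
  have hc2' : ∀ a : B, -(a * ξ) + a * z1 * z2 = c2 := hc2
  have hs : ∀ a b : B, σ a b = nbSig ξ z1 z2 a b := hσ
  have ht : ∀ b a : B, τ b a = nbTau ξ z1 z2 b a := by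
    intro b a
    rw [hτ b a, hs a b]
    rfl
  intro p
  obtain ⟨a, b, c⟩ := p
  simp only [hr12, hr23, hR, Prod.mk.injEq]
  refine ⟨?_, ?_, ?_⟩
  · simp only [hs, ht]
    exact nb_id1 ξ z1 z2 c1 ldist rd1 hc1' a b c
  · simp only [hs, ht]
    exact nb_id2 ξ z1 z2 c1 c2 ldist rd1 rd2 hc1' hc2' a b c
  · simp only [hs, ht]
    exact nb_id3 ξ z1 z2 c1 c2 ldist rd1 rd2 hc1' hc2' a b c
end

section
/- Let B be a near brace, with σᵖ_x(y) = x∘y∘z₁ - x∘ξ + z₂, τᵖ_y(x) = σᵖ_x(y)⁻¹∘x∘y, and set ξ̂ = ξ⁻¹, ẑᵢ = zᵢ∘ξ⁻¹, σ̂ᵖ_x(y) = ẑ₂ - x∘ξ̂ + x∘y∘ẑ₁, τ̂ᵖ_y(x) = σ̂ᵖ_x(y)⁻¹∘x∘y (under the distributivity hypotheses on ξ, z₁, z₂). Then σ̂ᵖ_{σᵖ_x(y)}(τᵖ_y(x)) = x, τ̂ᵖ_{τᵖ_y(x)}(σᵖ_x(y)) = y, σᵖ_{σ̂ᵖ_x(y)}(τ̂ᵖ_y(x))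 = x and τᵖ_{τ̂ᵖ_y(x)}(σ̂ᵖ_x(y)) = y; consequently the map (x,y) ↦ (σ̂ᵖ_x(y), τ̂ᵖ_y(x)) is the inverse of (x,y) ↦ (σᵖ_x(y), τᵖ_y(x)). -/
namespace NearBrace
variable {B : Type*} (N : NearBrace B)

lemma add_left_cancel' {a b c : B} (h : N.add a b = N.add a c) : b = c := by
  have h2 := congrArg (N.add (N.neg a)) h
  rwa [← N.add_assoc, ← N.add_assoc, N.neg_add, N.zero_add, N.zero_add] at h2

lemma neg_neg' (a : B) : N.neg (N.neg a) = a :=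
  N.add_left_cancel' (a := N.neg a) (by rw [N.add_neg, N.neg_add])

lemma neg_add_rev' (a b : B) : N.neg (N.add a b) = N.add (N.neg b) (N.neg a) := by
  apply N.add_left_cancel' (a := N.add a b)
  rw [N.add_neg, N.add_assoc, ← N.add_assoc b, N.add_neg, N.zero_add, N.add_neg]

lemma cancel' (x p q : B) :
    N.add p (N.add (N.neg (N.add q (N.add (N.neg x) p))) q) = x := by
  rw [N.neg_add_rev', N.neg_add_rev', N.neg_neg', N.add_assoc, N.neg_add,
    N.add_zero, ← N.add_assoc, N.add_neg, N.zero_add]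

lemma mul_inv_cancel_right' (a b : B) : N.mul (N.mul a b) (N.inv b) = a := by
  rw [N.mul_assoc, N.mul_inv, N.mul_one]

lemma inv_mul_cancel_right' (a b : B) : N.mul (N.mul a (N.inv b)) b = a := by
  rw [N.mul_assoc, N.inv_mul, N.mul_one]

lemma mul_inv_cancel_left' (a b : B) : N.mul a (N.mul (N.inv a) b) = b := by
  rw [← N.mul_assoc, N.mul_inv, N.one_mul]

lemma inv_mul_cancel_left' (a b : B) : N.mul (N.inv a) (N.mul a b) = b := by
  rw [← N.mul_assoc, N.inv_mul, N.one_mul]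

end NearBrace

theorem inverse_solution {B : Type*} (N : NearBrace B)
    (ξ z1 z2 c1 c2 : B)
    (hrdist : ∀ h, (h = ξ ∨ h = z1 ∨ h = z2 ∨ h = N.inv ξ ∨
        h = N.mul z1 (N.inv ξ) ∨ h = N.mul z2 (N.inv ξ)) → ∀ a b c : B,
      N.mul (N.add a (N.add (N.neg b) c)) h =
        N.add (N.mul a h) (N.add (N.neg (N.mul b h)) (N.mul c h)))
    (hc1 : ∀ a : B, N.add (N.mul (N.mul a z2) z1) (N.neg (N.mul a ξ)) = c1)
    (hc2 : ∀ a : B, N.add (N.neg (N.mul a ξ)) (N.mul (N.mul a z1) z2) = c2)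
    (σ τ σh τh : B → B → B)
    (hσ : ∀ x y : B, σ x y =
      N.add (N.mul (N.mul x y) z1) (N.add (N.neg (N.mul x ξ)) z2))
    (hτ : ∀ y x : B, τ y x = N.mul (N.inv (σ x y)) (N.mul x y))
    (hσh : ∀ x y : B, σh x y =
      N.add (N.mul z2 (N.inv ξ))
        (N.add (N.neg (N.mul x (N.inv ξ)))
          (N.mul (N.mul x y) (N.mul z1 (N.inv ξ)))))
    (hτh : ∀ y x : B, τh y x = N.mul (N.inv (σh x y)) (N.mul x y))
    (R Rh : B × B → B × B)
    (hR : ∀ x y : B, R (x, y) = (σ x y, τ y x))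
    (hRh : ∀ x y : B, Rh (x, y) = (σh x y, τh y x)) :
    (∀ x y : B, σh (σ x y) (τ y x) = x) ∧
    (∀ x y : B, τh (τ y x) (σ x y) = y) ∧
    (∀ x y : B, σ (σh x y) (τh y x) = x) ∧
    (∀ x y : B, τ (τh y x) (σh x y) = y) ∧
    (∀ p : B × B, Rh (R p) = p ∧ R (Rh p) = p) := by
  -- products
  have hστ : ∀ x y : B, N.mul (σ x y) (τ y x) = N.mul x y := by
    intro x y; rw [hτ, N.mul_inv_cancel_left']
  have hσhτh : ∀ x y : B, N.mul (σh x y) (τh y x) = N.mul x y := by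
    intro x y; rw [hτh, N.mul_inv_cancel_left']
  -- σ x y ∘ ξ⁻¹
  have hσξ : ∀ x y : B, N.mul (σ x y) (N.inv ξ) =
      N.add (N.mul (N.mul (N.mul x y) z1) (N.inv ξ))
        (N.add (N.neg x) (N.mul z2 (N.inv ξ))) := by
    intro x y
    rw [hσ, hrdist (N.inv ξ) (by tauto), N.mul_inv_cancel_right']
  -- σh x y ∘ ξ
  have hσhξ : ∀ x y : B, N.mul (σh x y) ξ =
      N.add z2 (N.add (N.neg x) (N.mul (N.mul x y) z1)) := by
    intro x y
    rw [hσh, hrdist ξ (by tauto), N.inv_mul_cancel_right', N.inv_mul_cancel_right',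
      N.mul_assoc, N.inv_mul_cancel_right']
  have k1 : ∀ x y : B, σh (σ x y) (τ y x) = x := by
    intro x y
    rw [hσh, hστ, hσξ, ← N.mul_assoc (N.mul x y) z1 (N.inv ξ)]
    exact N.cancel' x (N.mul z2 (N.inv ξ)) (N.mul (N.mul (N.mul x y) z1) (N.inv ξ))
  have k3 : ∀ x y : B, σ (σh x y) (τh y x) = x := by
    intro x y
    rw [hσ, hσhτh, hσhξ]
    exact N.cancel' x (N.mul (N.mul x y) z1) z2
  have k2 : ∀ x y : B, τh (τ y x) (σ x y) = y := by
    intro x y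
    rw [hτh, k1, hστ, N.inv_mul_cancel_left']
  have k4 : ∀ x y : B, τ (τh y x) (σh x y) = y := by
    intro x y
    rw [hτ, k3, hσhτh, N.inv_mul_cancel_left']
  refine ⟨k1, k2, k3, k4, ?_⟩
  rintro ⟨x, y⟩
  constructor
  · rw [hR, hRh, k1, k2]
  · rw [hRh, hR, k3, k4]
end

section
/- Let (G,∘) be a group and ř : G×G → G×G, ř(x,y) = (σᵖ_x(y), τᵖ_y(x)), an invertible map with σᵖ_x, τᵖ_y bijections, which is a p-braiding operator: (1) x∘y = σᵖ_x(y)∘τᵖ_y(x); (2) (id×m)∘ř₁₂∘ř₂₃ (x,y,w) = (fᵖ_{x∘y}(w), fᵖ_{x∘y}(w)⁻¹∘x∘y∘w) for some bijections fᵖ_a; (3) (m×id)∘ř₂₃∘ř₁₂ (x,y,w) = (gᵖ_x(y∘w), gᵖ_x(y∘w)⁻¹∘x∘y∘w) for some bijections gᵖ_x. Then ř satisfies the set-theoretic braid equation. -/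
theorem p_braiding_solves_braid_equation {G : Type*} [Group G]
    (σ τ : G → G → G)
    (hσ : ∀ x : G, Function.Bijective (σ x))
    (hτ : ∀ y : G, Function.Bijective (τ y))
    (R : G × G → G × G) (hR : ∀ x y : G, R (x, y) = (σ x y, τ y x))
    (hRbij : Function.Bijective R)
    (r12 r23 : G × G × G → G × G × G)
    (hr12 : ∀ p : G × G × G,
      r12 p = ((R (p.1, p.2.1)).1, (R (p.1, p.2.1)).2, p.2.2))
    (hr23 : ∀ p : G × G × G, r23 p = (p.1, R p.2))
    (f g : G → G → G)
    (hf : ∀ a : G, Function.Bijective (f a))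
    (hg : ∀ a : G, Function.Bijective (g a))
    (cond1 : ∀ x y : G, x * y = σ x y * τ y x)
    (cond2 : ∀ x y w : G,
      ((r12 (r23 (x, y, w))).1, (r12 (r23 (x, y, w))).2.1 * (r12 (r23 (x, y, w))).2.2)
        = (f (x * y) w, (f (x * y) w)⁻¹ * (x * y * w)))
    (cond3 : ∀ x y w : G,
      ((r23 (r12 (x, y, w))).1 * (r23 (r12 (x, y, w))).2.1, (r23 (r12 (x, y, w))).2.2)
        = (g x (y * w), (g x (y * w))⁻¹ * (x * y * w))) :
    ∀ p : G × G × G, r12 (r23 (r12 p)) = r23 (r12 (r23 p)) := by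
  have key2 : ∀ x y w : G, σ x (σ y w) = f (x*y) w ∧
      τ (σ y w) x * τ w y = (f (x*y) w)⁻¹ * (x*y*w) := by
    intro x y w
    have h := cond2 x y w
    simp only [hr12, hr23, hR] at h
    rw [Prod.mk.injEq] at h
    exact h
  have key3 : ∀ x y w : G, σ x y * σ (τ y x) w = g x (y*w) ∧
      τ w (τ y x) = (g x (y*w))⁻¹ * (x*y*w) := by
    intro x y w
    have h := cond3 x y w
    simp only [hr12, hr23, hR] at h
    rw [Prod.mk.injEq] at h
    exact h
  rintro ⟨x, y, w⟩
  simp only [hr12, hr23, hR]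
  have e3 : σ x (σ y w) = f (x*y) w := (key2 x y w).1
  have e4 : τ w (τ y x) = (g x (y*w))⁻¹ * (x*y*w) := (key3 x y w).2
  have hA : σ (σ x y) (σ (τ y x) w) = σ x (σ y w) := by
    have h := (key2 (σ x y) (τ y x) w).1
    rw [← cond1 x y] at h
    rw [h, e3]
  have hC : τ w (τ y x) = τ (τ w y) (τ (σ y w) x) := by
    have h := (key3 x (σ y w) (τ w y)).2
    rw [← cond1 y w] at h
    rw [h, e4, mul_assoc x (σ y w) (τ w y), ← cond1 y w, ← mul_assoc]
    group
  have hB : τ (σ (τ y x) w) (σ x y) = σ (τ (σ y w) x) (τ w y) := by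
    have e1 := (key2 (σ x y) (τ y x) w).2
    rw [← cond1 x y] at e1
    have e2 := (key3 x (σ y w) (τ w y)).1
    rw [← cond1 y w] at e2
    have h2 : σ (τ (σ y w) x) (τ w y) = (σ x (σ y w))⁻¹ * g x (y*w) := by
      rw [← e2]; group
    apply mul_right_cancel (b := τ w (τ y x))
    rw [e1, h2, e3, e4]
    group
  simp only [Prod.mk.injEq]
  exact ⟨hA, hB, hC⟩
end

section
/- Let B be a near brace with parameters ξ, z₁, z₂ satisfying right distributivity and constants c₁, c₂ as in Proposition on multi-parametric maps. Then the map ř(x,y) = (σᵖ_x(y), τᵖ_y(x)) with σᵖ_x(y) = x∘y∘z₁ - x∘ξ + z₂ and τᵖ_y(x) = σᵖ_x(y)⁻¹∘x∘y is a p-braiding, with fᵖ_a(b) = a∘b∘z₁∘z₁ - a∘ξ∘z₁ + c₁ + z₂ and gᵖ_a(b) = a∘b∘z₁ + c₂ - a∘ξ∘z₂ + z₂∘z₂. -/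
theorem near_brace_gives_p_braiding {B : Type*} (N : NearBrace B)
    (ξ z1 z2 c1 c2 : B)
    (hrdist : ∀ h, h = ξ ∨ h = z1 ∨ h = z2 → ∀ a b c : B,
      N.mul (N.add a (N.add (N.neg b) c)) h =
        N.add (N.mul a h) (N.add (N.neg (N.mul b h)) (N.mul c h)))
    (hc1 : ∀ a : B, N.add (N.mul (N.mul a z2) z1) (N.neg (N.mul a ξ)) = c1)
    (hc2 : ∀ a : B, N.add (N.neg (N.mul a ξ)) (N.mul (N.mul a z1) z2) = c2)
    (σ τ : B → B → B)
    (hσ : ∀ a b : B, σ a b =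
      N.add (N.mul (N.mul a b) z1) (N.add (N.neg (N.mul a ξ)) z2))
    (hτ : ∀ b a : B, τ b a = N.mul (N.inv (σ a b)) (N.mul a b))
    (R : B × B → B × B) (hR : ∀ a b : B, R (a, b) = (σ a b, τ b a))
    (r12 r23 : B × B × B → B × B × B)
    (hr12 : ∀ p : B × B × B,
      r12 p = ((R (p.1, p.2.1)).1, (R (p.1, p.2.1)).2, p.2.2))
    (hr23 : ∀ p : B × B × B, r23 p = (p.1, R p.2))
    (f g : B → B → B)
    (hf : ∀ a b : B, f a b =
      N.add (N.mul (N.mul (N.mul a b) z1) z1)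
        (N.add (N.neg (N.mul (N.mul a ξ) z1)) (N.add c1 z2)))
    (hg : ∀ a b : B, g a b =
      N.add (N.mul (N.mul a b) z1)
        (N.add c2 (N.add (N.neg (N.mul (N.mul a ξ) z2)) (N.mul z2 z2)))) :
    Function.Bijective R ∧
    (∀ x : B, Function.Bijective (σ x)) ∧
    (∀ y : B, Function.Bijective (fun x => τ y x)) ∧
    (∀ x y : B, N.mul x y = N.mul (σ x y) (τ y x)) ∧
    (∀ a : B, Function.Bijective (f a)) ∧
    (∀ a : B, Function.Bijective (g a)) ∧
    (∀ x y w : B,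
      ((r12 (r23 (x, y, w))).1,
        N.mul (r12 (r23 (x, y, w))).2.1 (r12 (r23 (x, y, w))).2.2)
        = (f (N.mul x y) w,
            N.mul (N.inv (f (N.mul x y) w)) (N.mul (N.mul x y) w))) ∧
    (∀ x y w : B,
      (N.mul (r23 (r12 (x, y, w))).1 (r23 (r12 (x, y, w))).2.1,
        (r23 (r12 (x, y, w))).2.2)
        = (g x (N.mul y w),
            N.mul (N.inv (g x (N.mul y w))) (N.mul (N.mul x y) w))) := by
  letI : Add B := ⟨N.add⟩
  letI : Zero B := ⟨N.zero⟩
  letI : Neg B := ⟨N.neg⟩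
  letI : Mul B := ⟨N.mul⟩
  letI : One B := ⟨N.one⟩
  letI : Inv B := ⟨N.inv⟩
  letI : AddGroup B := AddGroup.ofLeftAxioms N.add_assoc N.zero_add N.neg_add
  letI : Group B := Group.ofLeftAxioms N.mul_assoc N.one_mul N.inv_mul
  -- hypotheses in operator form
  have ld : ∀ a b c : B, a * (b + c) = a * b + (-(a * 0) + a * c) := N.dist
  have hz1 : ∀ a b c : B, (a + (-b + c)) * z1 = a * z1 + (-(b * z1) + c * z1) :=
    hrdist z1 (Or.inr (Or.inl rfl))
  have hz2 : ∀ a b c : B, (a + (-b + c)) * z2 = a * z2 + (-(b * z2) + c * z2) :=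
    hrdist z2 (Or.inr (Or.inr rfl))
  have hc1' : ∀ a : B, a * z2 * z1 + -(a * ξ) = c1 := hc1
  have hc2' : ∀ a : B, -(a * ξ) + a * z1 * z2 = c2 := hc2
  have hσ' : ∀ a b : B, σ a b = a * b * z1 + (-(a * ξ) + z2) := hσ
  have hτ' : ∀ b a : B, τ b a = (σ a b)⁻¹ * (a * b) := hτ
  have hf' : ∀ a b : B, f a b = a * b * z1 * z1 + (-(a * ξ * z1) + (c1 + z2)) := hf
  have hg' : ∀ a b : B, g a b = a * b * z1 + (c2 + (-(a * ξ * z2) + z2 * z2)) := hg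
  -- basic near-brace lemmas
  have Lneg : ∀ a b : B, a * (-b) = a * 0 + (-(a * b) + a * 0) := by
    intro a b
    have h := ld a b (-b)
    rw [add_neg_cancel] at h
    nth_rewrite 2 [h]
    rw [neg_add_cancel_left, add_neg_cancel_left]
  have L3 : ∀ x a b c : B, x * (a + (-b + c)) = x * a + (-(x * b) + x * c) := by
    intro x a b c
    rw [ld x a (-b + c), ld x (-b) c, Lneg]
    simp only [add_assoc, neg_add_cancel_left, add_neg_cancel_left]
  have swap1 : ∀ S A Q C : B, S = A + (-Q + C) ↔ Q + (-A + S) = C := by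
    intro S A Q C
    constructor
    · intro h; rw [h, neg_add_cancel_left, add_neg_cancel_left]
    · intro h; rw [← h, neg_add_cancel_left, add_neg_cancel_left]
  have hprod : ∀ x y : B, σ x y * τ y x = x * y := by
    intro x y
    rw [hτ', ← mul_assoc, mul_inv_cancel, one_mul]
  -- key braiding identities
  have key1 : ∀ x y w : B, σ x (σ y w) = f (x * y) w := by
    intro x y w
    rw [hσ' y w, hσ' x, L3, hz1, hf', ← hc1' x]
    simp only [mul_assoc, add_assoc]
  have key2 : ∀ x y w : B, σ x y * σ (τ y x) w = g x (y * w) := by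
    intro x y w
    rw [hσ' (τ y x) w, L3]
    simp only [← mul_assoc]
    rw [hprod, hσ' x y, hz2, hg', ← hc2' (x * y)]
    simp only [mul_assoc, add_assoc]
  have Keq : ∀ y x v : B, τ y x = v ↔ x * (ξ + (-(y * z1) + y * v⁻¹)) = z2 := by
    intro y x v
    rw [hτ', inv_mul_eq_iff_eq_mul, ← mul_inv_eq_iff_eq_mul, hσ', swap1, L3,
      ← mul_assoc, ← mul_assoc]
  -- translate the goal
  simp only [show N.mul = fun a b : B => a * b from rfl,
    show N.inv = fun a : B => a⁻¹ from rfl]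
  refine ⟨?_, ?_, ?_, ?_, ?_, ?_, ?_, ?_⟩
  · -- R bijective
    rw [Function.bijective_iff_has_inverse]
    refine ⟨fun p => ((z2 + (-p.1 + p.1 * p.2 * z1)) * ξ⁻¹,
      ((z2 + (-p.1 + p.1 * p.2 * z1)) * ξ⁻¹)⁻¹ * (p.1 * p.2)), ?_, ?_⟩
    · rintro ⟨a, b⟩
      rw [hR]
      have hE : (z2 + (-(σ a b) + a * b * z1)) * ξ⁻¹ = a := by
        rw [hσ']
        simp only [neg_add_rev, neg_neg, add_assoc, neg_add_cancel_left,
          neg_add_cancel, add_zero, add_neg_cancel_left]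
        rw [mul_inv_cancel_right]
      simp only [hprod, hE, inv_mul_cancel_left]
    · rintro ⟨u, v⟩
      rw [hR]
      have hx : ((z2 + (-u + u * v * z1)) * ξ⁻¹) * ξ = z2 + (-u + u * v * z1) := by
        rw [mul_assoc, inv_mul_cancel, mul_one]
      have hxy : ((z2 + (-u + u * v * z1)) * ξ⁻¹) *
          (((z2 + (-u + u * v * z1)) * ξ⁻¹)⁻¹ * (u * v)) = u * v :=
        mul_inv_cancel_left _ _
      have hs : σ ((z2 + (-u + u * v * z1)) * ξ⁻¹)
          (((z2 + (-u + u * v * z1)) * ξ⁻¹)⁻¹ * (u * v)) = u := by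
        rw [hσ', hxy, hx]
        simp only [neg_add_rev, neg_neg, add_assoc, neg_add_cancel,
          add_zero, add_neg_cancel_left, neg_add_cancel_left]
      have ht : τ (((z2 + (-u + u * v * z1)) * ξ⁻¹)⁻¹ * (u * v))
          ((z2 + (-u + u * v * z1)) * ξ⁻¹) = v := by
        rw [hτ', hs, hxy, inv_mul_cancel_left]
      rw [hs, ht]
  · -- σ bijective
    intro x
    rw [Function.bijective_iff_has_inverse]
    refine ⟨fun u => x⁻¹ * ((u + (-z2 + x * ξ)) * z1⁻¹), ?_, ?_⟩
    · intro y
      simp only [hσ', add_assoc, add_neg_cancel_left, neg_add_cancel_left,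
        neg_add_cancel, add_zero, mul_assoc, mul_inv_cancel, mul_one,
        inv_mul_cancel_left]
    · intro u
      rw [hσ']
      simp only [mul_inv_cancel_left, mul_assoc, inv_mul_cancel, mul_one]
      simp only [add_assoc, neg_add_cancel_left, add_neg_cancel_left,
        neg_add_cancel, add_zero]
  · -- τ bijective
    intro y
    constructor
    · intro x1 x2 h
      have h1 := (Keq y x1 (τ y x2)).mp h
      have h2 := (Keq y x2 (τ y x2)).mp rfl
      exact mul_right_cancel (h1.trans h2.symm)
    · intro v
      refine ⟨z2 * (ξ + (-(y * z1) + y * v⁻¹))⁻¹, (Keq y _ v).mpr ?_⟩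
      rw [mul_assoc, inv_mul_cancel, mul_one]
  · -- x * y = σ x y * τ y x
    intro x y
    exact (hprod x y).symm
  · -- f bijective
    intro a
    have hfa : f a = fun b => a * b * (z1 * z1) + (-(a * ξ * z1) + (c1 + z2)) :=
      funext fun b => by rw [hf' a b, mul_assoc (a * b)]
    rw [hfa, Function.bijective_iff_has_inverse]
    refine ⟨fun t => a⁻¹ * ((t + -(-(a * ξ * z1) + (c1 + z2))) * (z1 * z1)⁻¹), ?_, ?_⟩
    · intro b
      simp only [add_neg_cancel_right, mul_assoc, mul_inv_cancel, mul_one,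
        inv_mul_cancel_left]
    · intro t
      simp only [mul_inv_cancel_left, mul_assoc, inv_mul_cancel, mul_one,
        neg_add_cancel_right]
  · -- g bijective
    intro a
    have hga : g a = fun b => a * b * z1 + (c2 + (-(a * ξ * z2) + z2 * z2)) :=
      funext fun b => hg' a b
    rw [hga, Function.bijective_iff_has_inverse]
    refine ⟨fun t => a⁻¹ * ((t + -(c2 + (-(a * ξ * z2) + z2 * z2))) * z1⁻¹), ?_, ?_⟩
    · intro b
      simp only [add_neg_cancel_right, mul_assoc, mul_inv_cancel, mul_one,
        inv_mul_cancel_left]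
    · intro t
      simp only [mul_inv_cancel_left, mul_assoc, inv_mul_cancel, mul_one,
        neg_add_cancel_right]
  · -- condition 7
    intro x y w
    simp only [hr23, hr12, hR]
    refine Prod.ext ?_ ?_
    · exact key1 x y w
    · show τ (σ y w) x * τ w y = (f (x * y) w)⁻¹ * (x * y * w)
      rw [← key1, hτ', hτ']
      group
  · -- condition 8
    intro x y w
    simp only [hr12, hr23, hR]
    refine Prod.ext ?_ ?_
    · exact key2 x y w
    · show τ w (τ y x) = (g x (y * w))⁻¹ * (x * y * w)
      rw [← key2, hτ' w (τ y x), hτ' y x]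
      group
end
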